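/- Let Ω ⊆ ℂⁿ be an open connected set, let A_p > 0 (p ≥ 1) with A_p → ∞, and for each p let k_p : Ω → ℂ be a holomorphic function with no zeros on Ω. Let φ_p, φ'_p : Ω → ℝ be continuous functions satisfying φ_p − φ'_p = log|k_p| on Ω, and suppose φ_p/A_p → φ and φ'_p/A_p → φ' locally uniformly on Ω, where φ, φ' are continuous. Then the function ψ := φ − φ' is pluriharmonic on Ω, i.e., ψ is locally the real part of a holomorphic function. -/

import Mathlib

open MeasureTheory Metric Filter Topology

noncomputable section

/-- `ℂⁿ` with its Euclidean (Hermitian) norm. -/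
abbrev Cn (n : ℕ) := EuclideanSpace ℂ (Fin n)

noncomputable instance (n : ℕ) : MeasurableSpace (Cn n) := borel _
instance (n : ℕ) : BorelSpace (Cn n) := ⟨rfl⟩

/-- The sub-mean value inequality of `u` at `a` on the circle `{a + ρ e^{iθ} b : θ ∈ ℝ}`,
formulated (equivalently, by upper semicontinuity of `u`) via continuous majorants:
`u a ≤ (2π)⁻¹ ∫₀^{2π} u(a + ρ e^{iθ} b) dθ`. -/
def SubmeanOnCircle {n : ℕ} (u : Cn n → EReal) (a b : Cn n) (ρ : ℝ) : Prop :=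
  ∀ g : ℝ → ℝ, Continuous g →
    (∀ θ : ℝ, u (a + (↑ρ * Complex.exp (θ * Complex.I)) • b) ≤ (g θ : EReal)) →
    u a ≤ (((2 * Real.pi)⁻¹ * ∫ θ in (0 : ℝ)..(2 * Real.pi), g θ : ℝ) : EReal)

/-- `u : Ω → [-∞, ∞)` is plurisubharmonic on `Ω`: it is upper semicontinuous, does not take the
value `+∞`, is not identically `-∞` on any connected component of `Ω`, and satisfies the
sub-mean value inequality on small circles in every complex line. -/
def PshOn {n : ℕ} (u : Cn n → EReal) (Ω : Set (Cn n)) : Prop :=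
  UpperSemicontinuousOn u Ω ∧
  (∀ x ∈ Ω, u x ≠ ⊤) ∧
  (∀ x ∈ Ω, ∃ y ∈ connectedComponentIn Ω x, u y ≠ ⊥) ∧
  (∀ a ∈ Ω, ∀ b : Cn n, ∃ ε > 0, ∀ ρ : ℝ, 0 < ρ → ρ < ε →
    (∀ θ : ℝ, a + (↑ρ * Complex.exp (θ * Complex.I)) • b ∈ Ω) ∧ SubmeanOnCircle u a b ρ)

/-- A real-valued function is plurisubharmonic on `Ω` if it is so as an
extended-real-valued function. -/
def PshOnR {n : ℕ} (v : Cn n → ℝ) (Ω : Set (Cn n)) : Prop :=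
  PshOn (fun z => (v z : EReal)) Ω

/-- `ψ` is pluriharmonic on `Ω`: near every point of `Ω` it is the real part of a
holomorphic function. -/
def PluriharmonicOn {n : ℕ} (ψ : Cn n → ℝ) (Ω : Set (Cn n)) : Prop :=
  ∀ x ∈ Ω, ∃ U : Set (Cn n), IsOpen U ∧ x ∈ U ∧ U ⊆ Ω ∧
    ∃ g : Cn n → ℂ, DifferentiableOn ℂ g U ∧ ∀ y ∈ U, ψ y = (g y).re

/-!
On a ball `B ⊆ Ω` every nonvanishing holomorphic `k_p` has a holomorphic logarithm `h_p`
(a continuous branch exists because `B` is simply connected, and a continuous logarithm of a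
holomorphic function is holomorphic). The holomorphic functions `h_p / A_p` have real parts
`(φ_p - φ'_p) / A_p`, which converge uniformly to `ψ`. After normalising them to vanish at the
centre, the Borel–Carathéodory inequality turns uniform convergence of the real parts into
uniform convergence of the functions themselves on the half ball, and by the Schwarz lemma their
derivatives converge uniformly as well, so the limit is holomorphic with real part `ψ` (up to a
constant).
-/

open Set

theorem Convex.isSimplyConnected {E : Type*} [AddCommGroup E] [Module ℝ E] [TopologicalSpace E]
    [ContinuousAdd E] [ContinuousSMul ℝ E] {s : Set E} (hs : Convex ℝ s) (hne : s.Nonempty) :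
    IsSimplyConnected s :=
  have := hs.contractibleSpace hne
  SimplyConnectedSpace.ofContractible s

theorem UniformCauchySeqOn.exists_tendstoUniformlyOn {ι α β : Type*} [UniformSpace β]
    [Nonempty β] [CompleteSpace β] {l : Filter ι} [l.NeBot] {F : ι → α → β} {s : Set α}
    (hF : UniformCauchySeqOn F l s) : ∃ G : α → β, TendstoUniformlyOn F G l s :=
  ⟨fun x => limUnder l (F · x), hF.tendstoUniformlyOn_of_tendsto fun _ hx =>
    tendsto_nhds_limUnder (CompleteSpace.complete (hF.cauchy_map hx))⟩

namespace Complex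

variable {E : Type*} [NormedAddCommGroup E] [NormedSpace ℂ E]

theorem differentiableOn_of_continuousOn_of_eqOn_exp_comp {U : Set E} (hUo : IsOpen U)
    {f g : E → ℂ} (hgc : ContinuousOn g U) (hf : DifferentiableOn ℂ f U)
    (hfg : EqOn (exp ∘ g) f U) : DifferentiableOn ℂ g U := by
  intro z₀ hz₀
  set c := g z₀
  -- near `z₀`, `g` stays in a horizontal strip of width `2π` around `c`, where `exp` is inverted
  -- by the branch `w ↦ log (w * exp (-c)) + c`
  have hstrip : ∀ᶠ z in 𝓝 z₀, z ∈ U ∧ |(g z - c).im| < Real.pi := by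
    refine Filter.Eventually.and (hUo.mem_nhds hz₀) ?_
    have : ContinuousAt (fun z => |(g z - c).im|) z₀ :=
      (continuous_abs.comp continuous_im).continuousAt.comp
        ((hgc.continuousAt (hUo.mem_nhds hz₀)).sub continuousAt_const)
    exact this.eventually_lt continuousAt_const (by simp [c, Real.pi_pos])
  have hbranch : g =ᶠ[𝓝 z₀] fun z => log (f z * exp (-c)) + c := by
    filter_upwards [hstrip] with z ⟨hz, him⟩
    rw [← hfg hz, Function.comp_apply, ← exp_add, ← sub_eq_add_neg,
      log_exp (by linarith [(abs_lt.1 him).1]) (abs_lt.1 him).2.le, sub_add_cancel]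
  have hone : f z₀ * exp (-c) = 1 := by
    rw [← hfg hz₀, Function.comp_apply, ← exp_add, add_neg_cancel, exp_zero]
  refine (DifferentiableAt.congr_of_eventuallyEq ?_ hbranch).differentiableWithinAt
  refine (DifferentiableAt.clog ?_ ?_).add_const c
  · exact (hf.differentiableAt (hUo.mem_nhds hz₀)).mul_const _
  · rw [hone]
    exact one_mem_slitPlane

theorem exists_differentiableOn_eqOn_exp_comp {U : Set E} (hUc : IsSimplyConnected U)
    (hUo : IsOpen U) {f : E → ℂ} (hf : DifferentiableOn ℂ f U) (hU₀ : 0 ∉ f '' U) :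
    ∃ g : E → ℂ, DifferentiableOn ℂ g U ∧ EqOn (exp ∘ g) f U := by
  obtain ⟨g, hgc, hfg⟩ := exists_continuousOn_eqOn_exp_comp hUc hUo hf.continuousOn hU₀
  exact ⟨g, differentiableOn_of_continuousOn_of_eqOn_exp_comp hUo hgc hf hfg, hfg⟩

theorem borelCaratheodory_zero_ball {f : E → ℂ} {c z : E} {M R : ℝ} (hM : 0 < M)
    (hf : DifferentiableOn ℂ f (ball c R)) (hf₁ : MapsTo f (ball c R) {w | w.re ≤ M})
    (hz : z ∈ ball c R) (hf₂ : f c = 0) :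
    ‖f z‖ ≤ 2 * M * dist z c / (R - dist z c) := by
  rcases eq_or_ne z c with rfl | hne
  · simp [hf₂]
  have hd : 0 < dist z c := dist_pos.2 hne
  have hzR : dist z c < R := hz
  have hmaps : MapsTo (AffineMap.lineMap c z) (ball (0 : ℂ) (R / dist z c)) (ball c R) := by
    intro w hw
    simpa [lt_div_iff₀, hne, dist_comm c] using hw
  have h1 : (1 : ℂ) ∈ ball (0 : ℂ) (R / dist z c) := by simpa [one_lt_div hd] using hzR
  have := borelCaratheodory_zero hM (hf.comp (AffineMap.lineMap c z).differentiableOn hmaps)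
    (hf₁.comp hmaps) (div_pos (hd.trans hzR) hd) h1 (by simpa using hf₂)
  rw [Function.comp_apply, AffineMap.lineMap_apply_one, norm_one] at this
  calc ‖f z‖ ≤ 2 * M * 1 / (R / dist z c - 1) := this
    _ = 2 * M * dist z c / (R - dist z c) := by field_simp

variable {ι : Type*} {l : Filter ι} {c : E} {R : ℝ}

theorem uniformCauchySeqOn_ball_half_of_re {F : ι → E → ℂ}
    (hF : ∀ i, DifferentiableOn ℂ (F i) (ball c R)) (hc : ∀ i, F i c = 0)
    (hre : UniformCauchySeqOn (fun i z => (F i z).re) l (ball c R)) :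
    UniformCauchySeqOn F l (ball c (R / 2)) := by
  intro U hU
  obtain ⟨ε, hε, hεU⟩ := mem_uniformity_dist.1 hU
  filter_upwards [hre _ (dist_mem_uniformity (by positivity : 0 < ε / 4))] with m hm z hz
  apply hεU
  have hzc : dist z c < R / 2 := hz
  have hR : 0 < R := by linarith [dist_nonneg (x := z) (y := c)]
  have hre_le : MapsTo (F m.1 - F m.2) (ball c R) {w | w.re ≤ ε / 4} := fun w hw =>
    (le_abs_self _).trans (by simpa [Real.dist_eq] using (hm w hw).le)
  rw [dist_eq_norm]
  calc ‖F m.1 z - F m.2 z‖ ≤ 2 * (ε / 4) * dist z c / (R - dist z c) :=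
        borelCaratheodory_zero_ball (by positivity) ((hF m.1).sub (hF m.2)) hre_le
          (ball_subset_ball (by linarith) hz) (by simp [hc])
    _ ≤ 2 * (ε / 4) := by
      rw [div_le_iff₀ (by linarith)]
      nlinarith [dist_nonneg (x := z) (y := c)]
    _ < ε := by linarith

theorem _root_.TendstoUniformlyOn.differentiableOn_ball_half {F' : Type*}
    [NormedAddCommGroup F'] [NormedSpace ℂ F'] [CompleteSpace F'] [l.NeBot] {F : ι → E → F'}
    {G : E → F'} (hF : ∀ i, DifferentiableOn ℂ (F i) (ball c R))
    (hFG : TendstoUniformlyOn F G l (ball c R)) : DifferentiableOn ℂ G (ball c (R / 2)) := by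
  intro y hy
  have hR : 0 < R := by linarith [dist_nonneg (x := y) (y := c), mem_ball.1 hy]
  have hsub : ∀ z ∈ ball c (R / 2), ball z (R / 2) ⊆ ball c R := fun z hz =>
    ball_subset_ball' (by linarith [mem_ball.1 hz])
  have hFd : ∀ i, ∀ z ∈ ball c (R / 2), HasFDerivAt (F i) (fderiv ℂ (F i) z) z := fun i z hz =>
    ((hF i).differentiableAt (isOpen_ball.mem_nhds (hsub z hz (mem_ball_self (by positivity)))))
      |>.hasFDerivAt
  -- Schwarz lemma on `ball z (R / 2)`: `‖F i - F j‖ ≤ δ` forces `‖fderiv (F i - F j) z‖ ≤ 4 δ / R`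
  have hderiv : UniformCauchySeqOn (fun i => fderiv ℂ (F i)) l (ball c (R / 2)) := by
    intro U hU
    obtain ⟨ε, hε, hεU⟩ := mem_uniformity_dist.1 hU
    filter_upwards [hFG.uniformCauchySeqOn _ (dist_mem_uniformity (by positivity : 0 < ε * R / 8))]
      with m hm z hz
    apply hεU
    have hmaps : MapsTo (F m.1 - F m.2) (ball z (R / 2))
        (closedBall ((F m.1 - F m.2) z) (2 * (ε * R / 8))) := by
      intro w hw
      rw [mem_closedBall, dist_eq_norm]
      have hw' := hm w (hsub z hz hw)
      have hz' := hm z (hsub z hz (mem_ball_self (by positivity)))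
      rw [dist_eq_norm] at hw' hz'
      calc ‖(F m.1 - F m.2) w - (F m.1 - F m.2) z‖
          ≤ ‖F m.1 w - F m.2 w‖ + ‖F m.1 z - F m.2 z‖ := by
            simpa using norm_sub_le (F m.1 w - F m.2 w) (F m.1 z - F m.2 z)
        _ ≤ 2 * (ε * R / 8) := by linarith
    rw [dist_eq_norm, ← ((hFd m.1 z hz).sub (hFd m.2 z hz)).fderiv]
    calc ‖fderiv ℂ (F m.1 - F m.2) z‖ ≤ 2 * (ε * R / 8) / (R / 2) :=
          norm_fderiv_le_div_of_mapsTo_ball (((hF m.1).sub (hF m.2)).mono (hsub z hz)) hmaps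
            (by positivity)
      _ < ε := by field_simp; linarith
  obtain ⟨G', hG'⟩ := hderiv.exists_tendstoUniformlyOn
  exact (hasFDerivAt_of_tendstoUniformlyOn isOpen_ball hG' hFd
    (fun z hz => hFG.tendsto_at (ball_subset_ball (by linarith) hz)) hy)
    |>.differentiableAt.differentiableWithinAt

theorem exists_differentiableOn_re_eq_of_tendstoUniformlyOn [l.NeBot] {F : ι → E → ℂ}
    {u : E → ℝ} (hR : 0 < R) (hF : ∀ i, DifferentiableOn ℂ (F i) (ball c R))
    (hu : TendstoUniformlyOn (fun i z => (F i z).re) u l (ball c R)) :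
    ∃ G : E → ℂ, DifferentiableOn ℂ G (ball c (R / 4)) ∧ ∀ z ∈ ball c (R / 4), u z = (G z).re := by
  set H : ι → E → ℂ := fun i z => F i z - F i c
  have hH : ∀ i, DifferentiableOn ℂ (H i) (ball c R) := fun i => (hF i).sub_const _
  have hHre : TendstoUniformlyOn (fun i z => (H i z).re) (fun z => u z - u c) l (ball c R) :=
    hu.sub ((hu.tendsto_at (mem_ball_self hR)).tendstoUniformlyOn_const _)
  obtain ⟨G, hG⟩ := (uniformCauchySeqOn_ball_half_of_re hH (by simp [H])
    hHre.uniformCauchySeqOn).exists_tendstoUniformlyOn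
  have hquarter : ball c (R / 4) ⊆ ball c (R / 2) := ball_subset_ball (by linarith)
  refine ⟨fun z => G z + u c, ?_, fun z hz => ?_⟩
  · have := hG.differentiableOn_ball_half fun i => (hH i).mono (ball_subset_ball (by linarith))
    rw [div_div, show (2 : ℝ) * 2 = 4 by norm_num] at this
    exact this.add_const _
  · have hlim := tendsto_nhds_unique (hHre.tendsto_at (ball_subset_ball (by linarith) hz))
      ((continuous_re.tendsto _).comp (hG.tendsto_at (hquarter hz)))
    simp [← hlim]

end Complex

theorem limit_of_scaled_log_transition_is_pluriharmonic_general {n : ℕ}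
    (Ω : Set (Cn n)) (hΩo : IsOpen Ω)
    (A : ℕ → ℝ)
    (k : ℕ → Cn n → ℂ) (hk : ∀ p, DifferentiableOn ℂ (k p) Ω)
    (hknz : ∀ p, ∀ z ∈ Ω, k p z ≠ 0)
    (φp φp' : ℕ → Cn n → ℝ)
    (hlog : ∀ p, ∀ z ∈ Ω, φp p z - φp' p z = Real.log ‖k p z‖)
    (φ φ' : Cn n → ℝ)
    (hconv : TendstoLocallyUniformlyOn (fun p z => φp p z / A p) φ Filter.atTop Ω)
    (hconv' : TendstoLocallyUniformlyOn (fun p z => φp' p z / A p) φ' Filter.atTop Ω) :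
    PluriharmonicOn (fun z => φ z - φ' z) Ω := by
  intro x hx
  obtain ⟨r, hr, hrΩ⟩ := nhds_basis_closedBall.mem_iff.1 (hΩo.mem_nhds hx)
  have hB : ball x r ⊆ Ω := ball_subset_closedBall.trans hrΩ
  have hunif {f : ℕ → Cn n → ℝ} {g : Cn n → ℝ} (h : TendstoLocallyUniformlyOn f g atTop Ω) :
      TendstoUniformlyOn f g atTop (ball x r) :=
    ((tendstoLocallyUniformlyOn_iff_forall_isCompact hΩo).1 h _ hrΩ
      (isCompact_closedBall x r)).mono ball_subset_closedBall
  choose h hh hexp using fun p => Complex.exists_differentiableOn_eqOn_exp_comp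
    ((convex_ball x r).isSimplyConnected (nonempty_ball.2 hr)) isOpen_ball ((hk p).mono hB)
    (fun ⟨z, hz, hz0⟩ => hknz p z (hB hz) hz0)
  have hre : ∀ p, EqOn (fun z => φp p z / A p - φp' p z / A p) (fun z => (h p z / A p).re)
      (ball x r) := fun p z hz => by
    dsimp only
    rw [Complex.div_ofReal_re, ← sub_div, hlog p z (hB hz), ← hexp p hz, Function.comp_apply,
      Complex.norm_exp, Real.log_exp]
  obtain ⟨G, hG, hψG⟩ :=
    Complex.exists_differentiableOn_re_eq_of_tendstoUniformlyOn (F := fun p z => h p z / A p) hr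
      (fun p => by simpa only [div_eq_mul_inv] using (hh p).mul_const _)
      (((hunif hconv).sub (hunif hconv')).congr (.of_forall hre))
  exact ⟨ball x (r / 4), isOpen_ball, mem_ball_self (by positivity),
    (ball_subset_ball (by linarith)).trans hB, G, hG, hψG⟩

/-- Let `Ω ⊆ ℂⁿ` be open and connected, `A_p > 0` with `A_p → ∞`, and for
each `p` let `k_p` be a nonvanishing holomorphic function on `Ω`. If continuous functions
`φ_p, φ'_p : Ω → ℝ` satisfy `φ_p − φ'_p = log|k_p|` on `Ω`, and `φ_p/A_p → φ`,
`φ'_p/A_p → φ'` locally uniformly on `Ω` with `φ, φ'` continuous, then `ψ := φ − φ'` is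
pluriharmonic on `Ω`. -/
theorem limit_of_scaled_log_transition_is_pluriharmonic {n : ℕ}
    (Ω : Set (Cn n)) (hΩo : IsOpen Ω) (hΩc : IsConnected Ω)
    (A : ℕ → ℝ) (hA : ∀ p, 0 < A p) (hAtop : Filter.Tendsto A Filter.atTop Filter.atTop)
    (k : ℕ → Cn n → ℂ) (hk : ∀ p, DifferentiableOn ℂ (k p) Ω)
    (hknz : ∀ p, ∀ z ∈ Ω, k p z ≠ 0)
    (φp φp' : ℕ → Cn n → ℝ)
    (hφpc : ∀ p, ContinuousOn (φp p) Ω) (hφp'c : ∀ p, ContinuousOn (φp' p) Ω)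
    (hlog : ∀ p, ∀ z ∈ Ω, φp p z - φp' p z = Real.log ‖k p z‖)
    (φ φ' : Cn n → ℝ) (hφ : ContinuousOn φ Ω) (hφ' : ContinuousOn φ' Ω)
    (hconv : TendstoLocallyUniformlyOn (fun p z => φp p z / A p) φ Filter.atTop Ω)
    (hconv' : TendstoLocallyUniformlyOn (fun p z => φp' p z / A p) φ' Filter.atTop Ω) :
    PluriharmonicOn (fun z => φ z - φ' z) Ω :=
  limit_of_scaled_log_transition_is_pluriharmonic_general Ω hΩo A k hk hknz φp φp' hlog φ φ' hconv
    hconv'
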